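/- Let ψ: k[x_1,...,x_n] → k[x_1,...,x_m] be a k-algebra homomorphism with ψ(x_i) ≠ 0 for all i, u ∈ Γ^m, and u_ψ = (deg_u ψ(x_1),...,deg_u ψ(x_n)). Fix 1 ≤ l ≤ m and let k[x]^ψ = ψ^{-1}(k[x_1,...,x_l]) and k[x]^{ψ^u} = (ψ^u)^{-1}(k[x_1,...,x_l]). Then for every f ∈ k[x]^ψ, the initial form f^{u_ψ} belongs to k[x]^{ψ^u}. -/

import Mathlib

open MvPolynomial

/-- The `w`-weight `a·w` of an exponent vector `a`. -/
def mwt {n : ℕ} {Γ : Type*} [AddCommGroup Γ] (w : Fin n → Γ) (a : Fin n →₀ ℕ) : Γ :=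
  a.sum fun i e => e • w i

/-- The `w`-degree of a polynomial, with `deg_w 0 = ⊥`. -/
noncomputable def wdeg {k : Type*} [CommRing k] {n : ℕ} {Γ : Type*}
    [AddCommGroup Γ] [LinearOrder Γ] [IsOrderedAddMonoid Γ] (w : Fin n → Γ) (f : MvPolynomial (Fin n) k) : WithBot Γ :=
  f.support.sup fun a => ((mwt w a : Γ) : WithBot Γ)

/-- The `w`-initial form of a polynomial (`0` for the zero polynomial). -/
noncomputable def initForm {k : Type*} [CommRing k] {n : ℕ} {Γ : Type*}
    [AddCommGroup Γ] [LinearOrder Γ] [IsOrderedAddMonoid Γ] (w : Fin n → Γ) (f : MvPolynomial (Fin n) k) :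
    MvPolynomial (Fin n) k :=
  ∑ a ∈ f.support.filter (fun a => ((mwt w a : Γ) : WithBot Γ) = wdeg w f),
    monomial a (f.coeff a)

/-!
Grade `k[x_1, …, x_m]` by `Γ` through the `k`-algebra map `x_i ↦ x_i t^{u_i}` into the
monoid algebra `k[x][Γ]`; the coefficient of `t^γ` is the `u`-homogeneous component of degree
`γ`. The image of `ψ(x_i)` has top degree `deg_u ψ(x_i)` and top coefficient `ψ(x_i)^u`, and
top coefficients are multiplicative in an ordered cancellative monoid. Hence the coefficient
of `t^δ`, `δ = deg_{u_ψ} f`, in the image of `ψ(f)` is `ψ^u(f^{u_ψ})`. It is a homogeneous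
component of `ψ(f)`, so it involves only variables that occur in `ψ(f)`.
-/

namespace AddMonoidAlgebra

variable {R Γ ι : Type*} [CommSemiring R] [AddCommMonoid Γ] [LinearOrder Γ]
  [IsOrderedCancelAddMonoid Γ]

theorem coeff_add_of_supDegree_le_coe {p q : AddMonoidAlgebra R Γ} {a b : Γ}
    (hp : p.supDegree WithBot.some ≤ a) (hq : q.supDegree WithBot.some ≤ b) :
    (p * q).coeff (a + b) = p.coeff a * q.coeff b :=
  coeff_mul_add_of_uniqueAdd fun _ _ hx hy =>
    (add_eq_add_iff_eq_and_eq (WithBot.coe_le_coe.1 (Finset.sup_le_iff.1 hp _ hx))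
      (WithBot.coe_le_coe.1 (Finset.sup_le_iff.1 hq _ hy))).1

theorem supDegree_finsetProd_le_sum (s : Finset ι) {p : ι → AddMonoidAlgebra R Γ}
    {d : ι → Γ} (h : ∀ i ∈ s, (p i).supDegree WithBot.some ≤ d i) :
    (∏ i ∈ s, p i).supDegree WithBot.some ≤ ↑(∑ i ∈ s, d i) :=
  (supDegree_prod_le WithBot.coe_zero WithBot.coe_add).trans <| by
    rw [WithBot.coe_sum]
    exact Finset.sum_le_sum h

theorem coeff_finsetProd_of_supDegree_le (s : Finset ι) {p : ι → AddMonoidAlgebra R Γ}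
    {d : ι → Γ} (h : ∀ i ∈ s, (p i).supDegree WithBot.some ≤ d i) :
    (∏ i ∈ s, p i).coeff (∑ i ∈ s, d i) = ∏ i ∈ s, (p i).coeff (d i) := by
  induction s using Finset.cons_induction with
  | empty => simp [one_def]
  | cons i s _ ih =>
    have hs : ∀ j ∈ s, (p j).supDegree WithBot.some ≤ d j :=
      fun j hj => h j (s.mem_cons_of_mem hj)
    rw [Finset.prod_cons, Finset.sum_cons, Finset.prod_cons,
      coeff_add_of_supDegree_le_coe (h i (s.mem_cons_self i)) (supDegree_finsetProd_le_sum s hs),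
      ih hs]

theorem supDegree_pow_le_nsmul {p : AddMonoidAlgebra R Γ} {d : Γ}
    (h : p.supDegree WithBot.some ≤ d) (e : ℕ) :
    (p ^ e).supDegree WithBot.some ≤ ↑(e • d) := by
  simpa using supDegree_finsetProd_le_sum (Finset.range e) (p := fun _ => p) fun _ _ => h

theorem coeff_pow_nsmul_of_supDegree_le {p : AddMonoidAlgebra R Γ} {d : Γ}
    (h : p.supDegree WithBot.some ≤ d) (e : ℕ) :
    (p ^ e).coeff (e • d) = p.coeff d ^ e := by
  simpa using coeff_finsetProd_of_supDegree_le (Finset.range e) (p := fun _ => p) fun _ _ => h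

section Evaluation

variable {σ k : Type*} [CommSemiring k] [Algebra k R] {g : σ → AddMonoidAlgebra R Γ}
  {d : σ → Γ}

theorem supDegree_aeval_monomial_le (hg : ∀ i, (g i).supDegree WithBot.some ≤ d i)
    (a : σ →₀ ℕ) (c : k) :
    (aeval g (monomial a c)).supDegree WithBot.some ≤ Finsupp.weight d a := by
  rw [aeval_monomial, ← Algebra.smul_def, Finsupp.weight_apply, Finsupp.prod, Finsupp.sum]
  exact (Finset.sup_mono Finsupp.support_smul).trans
    (supDegree_finsetProd_le_sum _ fun i _ => supDegree_pow_le_nsmul (hg i) _)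

theorem coeff_aeval_monomial_weight (hg : ∀ i, (g i).supDegree WithBot.some ≤ d i)
    (a : σ →₀ ℕ) (c : k) :
    (aeval g (monomial a c)).coeff (Finsupp.weight d a) =
      aeval (fun i => (g i).coeff (d i)) (monomial a c) := by
  rw [aeval_monomial, aeval_monomial, ← Algebra.smul_def, ← Algebra.smul_def,
    Finsupp.weight_apply, Finsupp.prod, Finsupp.prod, Finsupp.sum, coeff_smul_apply,
    coeff_finsetProd_of_supDegree_le _ fun i _ => supDegree_pow_le_nsmul (hg i) _]
  simp_rw [coeff_pow_nsmul_of_supDegree_le (hg _)]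

theorem coeff_aeval_eq_aeval_weightedHomogeneousComponent
    (hg : ∀ i, (g i).supDegree WithBot.some ≤ d i) {f : MvPolynomial σ k} {δ : Γ}
    (hf : weightedTotalDegree' d f ≤ δ) :
    (aeval g f).coeff δ =
      aeval (fun i => (g i).coeff (d i)) (weightedHomogeneousComponent d δ f) := by
  classical
  conv_lhs => rw [f.as_sum]
  rw [weightedHomogeneousComponent_apply, map_sum, map_sum, coeff_sum, Finsupp.finsetSum_apply,
    Finset.sum_filter]
  refine Finset.sum_congr rfl fun a ha => ?_
  split_ifs with hδ
  · rw [← hδ, coeff_aeval_monomial_weight hg]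
  · refine coeff_eq_zero_of_not_le_supDegree (D := WithBot.some) fun hle => hδ ?_
    refine le_antisymm (WithBot.coe_le_coe.1 (Finset.sup_le_iff.1 hf a ha)) ?_
    exact WithBot.coe_le_coe.1 (hle.trans (supDegree_aeval_monomial_le hg a _))

end Evaluation

end AddMonoidAlgebra

section WeightGrading

variable {σ k Γ : Type*} [CommSemiring k] [AddCommMonoid Γ]

noncomputable def weightGrading (w : σ → Γ) :
    MvPolynomial σ k →ₐ[k] AddMonoidAlgebra (MvPolynomial σ k) Γ :=
  aeval fun i => AddMonoidAlgebra.single (w i) (X i)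

theorem weightGrading_monomial (w : σ → Γ) (a : σ →₀ ℕ) (c : k) :
    weightGrading w (monomial a c) =
      AddMonoidAlgebra.single (Finsupp.weight w a) (monomial a c) := by
  rw [weightGrading, aeval_monomial, Finsupp.prod]
  simp_rw [AddMonoidAlgebra.single_pow]
  rw [AddMonoidAlgebra.prod_single, AddMonoidAlgebra.coe_algebraMap, Function.comp_apply,
    AddMonoidAlgebra.single_mul_single, zero_add, Finsupp.weight_apply, Finsupp.sum, monomial_eq,
    Finsupp.prod, MvPolynomial.algebraMap_eq]

theorem coeff_weightGrading (w : σ → Γ) (φ : MvPolynomial σ k) (γ : Γ) :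
    (weightGrading w φ).coeff γ = weightedHomogeneousComponent w γ φ := by
  classical
  induction φ using MvPolynomial.induction_on' with
  | monomial a c =>
    rw [weightGrading_monomial, AddMonoidAlgebra.coeff_single, Finsupp.single_apply,
      weightedHomogeneousComponent_of_mem (isWeightedHomogeneous_monomial w a c rfl)]
    simp only [eq_comm]
  | add p q hp hq => rw [map_add, AddMonoidAlgebra.coeff_add, Finsupp.add_apply, hp, hq, map_add]

theorem supDegree_weightGrading_le [LinearOrder Γ] (w : σ → Γ) (φ : MvPolynomial σ k) :
    (weightGrading w φ).supDegree WithBot.some ≤ weightedTotalDegree' w φ := by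
  refine Finset.sup_le fun γ hγ => ?_
  rw [Finsupp.mem_support_iff, coeff_weightGrading] at hγ
  obtain ⟨a, ha, rfl⟩ : ∃ a ∈ φ.support, Finsupp.weight w a = γ := by
    by_contra! h
    exact hγ (weightedHomogeneousComponent_eq_zero' γ φ h)
  exact Finset.le_sup (f := fun a => (Finsupp.weight w a : WithBot Γ)) ha

theorem weightedHomogeneousComponent_mem_supported {s : Set σ} {w : σ → Γ} (γ : Γ)
    {φ : MvPolynomial σ k} (hφ : φ ∈ supported k s) :
    weightedHomogeneousComponent w γ φ ∈ supported k s := by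
  classical
  rw [MvPolynomial.mem_supported] at hφ ⊢
  intro i hi
  obtain ⟨a, ha, hia⟩ := (mem_vars_iff_mem_support i).1 hi
  rw [support_weightedHomogeneousComponent, Finset.mem_filter] at ha
  exact hφ ((mem_vars_iff_mem_support i).2 ⟨a, ha.1, hia⟩)

end WeightGrading

theorem mwt_eq_weight {Γ : Type*} [AddCommGroup Γ] {n : ℕ} (w : Fin n → Γ)
    (a : Fin n →₀ ℕ) :
    mwt w a = Finsupp.weight w a :=
  (Finsupp.weight_apply w a).symm

section InitialForm

variable {k Γ : Type*} [CommRing k] [AddCommGroup Γ] [LinearOrder Γ] [IsOrderedAddMonoid Γ]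
  {n : ℕ}

theorem wdeg_eq_weightedTotalDegree' (w : Fin n → Γ) (f : MvPolynomial (Fin n) k) :
    wdeg w f = weightedTotalDegree' w f := by
  simp only [wdeg, weightedTotalDegree', mwt_eq_weight]

theorem initForm_eq_weightedHomogeneousComponent {w : Fin n → Γ} {f : MvPolynomial (Fin n) k}
    {δ : Γ} (h : wdeg w f = δ) : initForm w f = weightedHomogeneousComponent w δ f := by
  classical
  rw [initForm, weightedHomogeneousComponent_apply, h]
  simp only [mwt_eq_weight, WithBot.coe_eq_coe]

end InitialForm

theorem initForm_mem_preimage_general {k Γ : Type*} [CommRing k]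
    [AddCommGroup Γ] [LinearOrder Γ] [IsOrderedAddMonoid Γ] {n m l : ℕ}
    (ψ : MvPolynomial (Fin n) k →ₐ[k] MvPolynomial (Fin m) k)
    (u : Fin m → Γ) (uψ : Fin n → Γ)
    (huψ : ∀ i, (uψ i : WithBot Γ) = wdeg u (ψ (X i)))
    (f : MvPolynomial (Fin n) k)
    (hf : ψ f ∈ supported k {i : Fin m | (i : ℕ) < l}) :
    aeval (fun i => initForm u (ψ (X i))) (initForm uψ f)
      ∈ supported k {i : Fin m | (i : ℕ) < l} := by
  obtain rfl | hf0 := eq_or_ne f 0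
  · simp [initForm]
  obtain ⟨δ, hδ⟩ := WithBot.ne_bot_iff_exists.1
    ((weightedTotalDegree'_eq_bot_iff uψ f).not.2 hf0)
  have hψX : ∀ i, (weightGrading u (ψ (X i))).supDegree WithBot.some ≤ uψ i := fun i =>
    (supDegree_weightGrading_le u _).trans_eq (by rw [huψ, wdeg_eq_weightedTotalDegree'])
  have hgraded : weightGrading u (ψ f) = aeval (fun i => weightGrading u (ψ (X i))) f :=
    AlgHom.congr_fun (aeval_unique ((weightGrading u).comp ψ)) f
  have hcomponent : weightedHomogeneousComponent u δ (ψ f) =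
      aeval (fun i => initForm u (ψ (X i))) (initForm uψ f) := by
    rw [← coeff_weightGrading, hgraded,
      AddMonoidAlgebra.coeff_aeval_eq_aeval_weightedHomogeneousComponent hψX hδ.ge,
      initForm_eq_weightedHomogeneousComponent (by rw [wdeg_eq_weightedTotalDegree', hδ])]
    simp only [coeff_weightGrading,
      initForm_eq_weightedHomogeneousComponent (huψ _).symm]
  exact hcomponent ▸ weightedHomogeneousComponent_mem_supported δ hf

/-- If `f ∈ ψ⁻¹(k[x_1,…,x_l])` then `f^{u_ψ} ∈ (ψ^u)⁻¹(k[x_1,…,x_l])`. -/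
theorem initForm_mem_preimage {k Γ : Type*} [CommRing k] [IsDomain k]
    [AddCommGroup Γ] [LinearOrder Γ] [IsOrderedAddMonoid Γ] {n m l : ℕ} (hnm : n ≤ m) (hl1 : 1 ≤ l) (hlm : l ≤ m)
    (ψ : MvPolynomial (Fin n) k →ₐ[k] MvPolynomial (Fin m) k)
    (hψ : ∀ i, ψ (X i) ≠ 0) (u : Fin m → Γ) (uψ : Fin n → Γ)
    (huψ : ∀ i, (uψ i : WithBot Γ) = wdeg u (ψ (X i)))
    (f : MvPolynomial (Fin n) k)
    (hf : ψ f ∈ supported k {i : Fin m | (i : ℕ) < l}) :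
    aeval (fun i => initForm u (ψ (X i))) (initForm uψ f)
      ∈ supported k {i : Fin m | (i : ℕ) < l} :=
  initForm_mem_preimage_general ψ u uψ huψ f hf
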